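/- Let m ≥ 1 be an integer and q_m(μ) = 12 + 14(m−1)μ + (23m(m−3)/4)μ² + (m−1)(m²−5m−2)μ³ + ((m³−10m²+15m+10)/16)μ⁴. For m ≥ 8, q_m(μ) > 0 for all μ > 0. For m = 1 and m = 2, q_m has exactly two positive roots μ_{m,1} < μ_{m,2}, and for μ > 0 one has q_m(μ) ≥ 0 if and only if μ ≤ μ_{m,1} or μ ≥ μ_{m,2}; moreover μ_{1,1} = (1/2)√(23−√337) and μ_{1,2} = (1/2)√(23+√337). For 3 ≤ m ≤ 7, q_m has exactly one positive root μ_m, and for μ > 0 one has q_m(μ) ≥ 0 if and only if μ ≤ μ_m. -/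
import Mathlib

/-- `q_m(μ) = P_μ^m(1/2)` for the type `IV₄` representative polynomial. -/
noncomputable def qIV4 (m : ℕ) (μ : ℝ) : ℝ :=
  12 + 14 * ((m : ℝ) - 1) * μ + (23 * (m : ℝ) * ((m : ℝ) - 3) / 4) * μ ^ 2 +
    ((m : ℝ) - 1) * ((m : ℝ) ^ 2 - 5 * (m : ℝ) - 2) * μ ^ 3 +
    (((m : ℝ) ^ 3 - 10 * (m : ℝ) ^ 2 + 15 * (m : ℝ) + 10) / 16) * μ ^ 4

/- ### Auxiliary lemmas -/

lemma qIV4_q1_eq (μ : ℝ) : qIV4 1 μ = 12 - (23/2)*μ^2 + μ^4 := by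
  simp [qIV4]; ring

lemma qIV4_q2_eq (μ : ℝ) : qIV4 2 μ = 12 + 14*μ - (23/2)*μ^2 - 8*μ^3 + (1/2)*μ^4 := by
  simp [qIV4]; norm_num; ring

lemma qIV4_m1dec (u v : ℝ) (hu : 0 < u) (huv : u < v) (hv2 : v ≤ 2) :
    qIV4 1 v * u < qIV4 1 u * v := by
  have hv : 0 < v := hu.trans huv
  have huv4 : u*v ≤ 4 := by nlinarith
  have hS : u^2 + u*v + v^2 ≤ 12 := by nlinarith
  have hbr : 0 < 12 + (23/2)*(u*v) - u*v*(u^2+u*v+v^2) := by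
    nlinarith [mul_nonneg (mul_pos hu hv).le (by linarith : (0:ℝ) ≤ 12 - (u^2+u*v+v^2))]
  rw [qIV4_q1_eq, qIV4_q1_eq]
  nlinarith [mul_pos (by linarith : (0:ℝ) < v - u) hbr]

lemma qIV4_m1inc (u v : ℝ) (hu2 : 2 ≤ u) (huv : u < v) :
    qIV4 1 u * v^3 < qIV4 1 v * u^3 := by
  have hu : 0 < u := by linarith
  have hv : 0 < v := by linarith
  have huu : 0 < u^2*v^2 := by positivity
  have hva : (0:ℝ) ≤ v^2 - 4 := by nlinarith
  have hua : (0:ℝ) ≤ u^2 - 4 := by nlinarith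
  have h1 : 4*u^2 ≤ u^2*v^2 := by nlinarith [mul_nonneg hva (sq_nonneg u)]
  have h2 : 4*v^2 ≤ u^2*v^2 := by nlinarith [mul_nonneg hua (sq_nonneg v)]
  have h3 : 4*(u*v) ≤ u^2*v^2 := by nlinarith [mul_pos hu hv]
  have h4 : 4*(u^2*v^2) ≤ u^3*v^3 := by nlinarith [mul_pos hu hv]
  have hbr : 0 < -12*(u^2+u*v+v^2) + (23/2)*(u^2*v^2) + u^3*v^3 := by nlinarith
  rw [qIV4_q1_eq, qIV4_q1_eq]
  nlinarith [mul_pos (by linarith : (0:ℝ) < v - u) hbr]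

lemma qIV4_m2dec (u v : ℝ) (hu : 0 < u) (huv : u < v) (hv10 : v ≤ 10) :
    qIV4 2 v * u < qIV4 2 u * v := by
  have hv : 0 < v := hu.trans huv
  have hS : u^2 + u*v + v^2 ≤ 20*u + 10*v := by
    nlinarith [mul_nonneg (by linarith : (0:ℝ) ≤ 10-u) hu.le,
      mul_nonneg (by linarith : (0:ℝ) ≤ 10-v) hv.le,
      mul_nonneg (by linarith : (0:ℝ) ≤ 10-v) hu.le]
  have hbr : 0 < 12 + (23/2)*(u*v) + 8*(u*v*(u+v)) - (1/2)*(u*v*(u^2+u*v+v^2)) := by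
    nlinarith [mul_pos (mul_pos hu hv) (by linarith : (0:ℝ) < 3*v - 2*u),
      mul_nonneg (mul_pos hu hv).le (by linarith : (0:ℝ) ≤ 20*u + 10*v - (u^2+u*v+v^2))]
  rw [qIV4_q2_eq, qIV4_q2_eq]
  nlinarith [mul_pos (by linarith : (0:ℝ) < v - u) hbr]

lemma qIV4_m2inc (u v : ℝ) (hu3 : 3 ≤ u) (huv : u < v) :
    qIV4 2 u * v^3 < qIV4 2 v * u^3 := by
  have hu : 0 < u := by linarith
  have hv : 0 < v := by linarith
  have huu : 0 < u^2*v^2 := by positivity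
  have huv9 : 9 ≤ u*v := by nlinarith
  have hva : (0:ℝ) ≤ v^2 - 9 := by nlinarith
  have hua : (0:ℝ) ≤ u^2 - 9 := by nlinarith
  have h1 : 9*u^2 ≤ u^2*v^2 := by nlinarith [mul_nonneg hva (sq_nonneg u)]
  have h2 : 9*v^2 ≤ u^2*v^2 := by nlinarith [mul_nonneg hua (sq_nonneg v)]
  have h3 : 9*(u*v) ≤ u^2*v^2 := by nlinarith
  have h4 : 3*(u^2*v) ≤ u^2*v^2 := by nlinarith [sq_nonneg u, mul_pos hu hv]
  have h5 : 3*(u*v^2) ≤ u^2*v^2 := by nlinarith [sq_nonneg v, mul_pos hu hv]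
  have h6 : 9*(u^2*v^2) ≤ u^3*v^3 := by
    nlinarith [mul_nonneg (by linarith : (0:ℝ) ≤ u*v - 9) huu.le]
  have hbr : 0 < -12*(u^2+u*v+v^2) - 14*(u^2*v + u*v^2) + (23/2)*(u^2*v^2) + (1/2)*(u^3*v^3) := by
    nlinarith
  rw [qIV4_q2_eq, qIV4_q2_eq]
  nlinarith [mul_pos (by linarith : (0:ℝ) < v - u) hbr]

lemma qIV4_pos_ge8 (m : ℕ) (h8 : 8 ≤ m) (μ : ℝ) (hμ : 0 < μ) : 0 < qIV4 m μ := by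
  have hx : (8:ℝ) ≤ (m:ℝ) := by exact_mod_cast h8
  set x := (m:ℝ) with hxd
  have h1 : 0 ≤ 14*(x-1)*μ := mul_nonneg (by linarith) hμ.le
  have h2 : 0 ≤ 23*x*(x-3)/4*μ^2 := mul_nonneg (by nlinarith) (by positivity)
  have h3 : 0 ≤ (x-1)*(x^2-5*x-2)*μ^3 :=
    mul_nonneg (mul_nonneg (by linarith) (by nlinarith)) (by positivity)
  have h4 : 0 ≤ (x^3-10*x^2+15*x+10)/16*μ^4 := by
    have : (0:ℝ) ≤ x^3-10*x^2+15*x+10 := by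
      nlinarith [mul_nonneg (mul_nonneg (by linarith : (0:ℝ) ≤ x-8) (by linarith : (0:ℝ) ≤ x-8))
        (by linarith : (0:ℝ) ≤ x-8), sq_nonneg (x-8)]
    exact mul_nonneg (by linarith) (by positivity)
  simp only [qIV4]
  nlinarith [h1, h2, h3, h4]

lemma qIV4_mono_dec3 (a b c d u v : ℝ) (ha : 0 ≤ a) (hb : 0 ≤ b) (hd : d < 0)
    (hu : 0 < u) (huv : u < v) :
    (12 + a*v + b*v^2 + c*v^3 + d*v^4) * u^3 < (12 + a*u + b*u^2 + c*u^3 + d*u^4) * v^3 := by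
  have hv : 0 < v := hu.trans huv
  have hvu : 0 < v - u := by linarith
  have h12 : 0 < 12*((v-u)*(v^2+u*v+u^2)) := by
    nlinarith [mul_pos hu hv, sq_nonneg u, sq_nonneg v, mul_pos hvu (mul_pos hu hv)]
  have hA : 0 ≤ a*(u*v*(v+u)*(v-u)) :=
    mul_nonneg ha (by nlinarith [mul_pos (mul_pos (mul_pos hu hv) (add_pos hv hu)) hvu])
  have hB : 0 ≤ b*(u^2*v^2*(v-u)) :=
    mul_nonneg hb (by nlinarith [mul_pos (mul_pos (pow_pos hu 2) (pow_pos hv 2)) hvu])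
  have hD : 0 < (-d)*(u^3*v^3*(v-u)) :=
    mul_pos (by linarith) (by nlinarith [mul_pos (mul_pos (pow_pos hu 3) (pow_pos hv 3)) hvu])
  nlinarith [h12, hA, hB, hD]

lemma qIV4_mono_mid (m : ℕ) (h3 : 3 ≤ m) (h7 : m ≤ 7) (u v : ℝ) (hu : 0 < u) (huv : u < v) :
    qIV4 m v * u^3 < qIV4 m u * v^3 := by
  simp only [qIV4]
  have hx3 : (3:ℝ) ≤ (m:ℝ) := by exact_mod_cast h3
  have hx7 : (m:ℝ) ≤ 7 := by exact_mod_cast h7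
  set x := (m:ℝ) with hxd
  exact qIV4_mono_dec3 (14*(x-1)) (23*x*(x-3)/4) ((x-1)*(x^2-5*x-2))
    ((x^3-10*x^2+15*x+10)/16) u v (by linarith) (by nlinarith)
    (by nlinarith [mul_nonneg (mul_nonneg (by linarith : (0:ℝ) ≤ x-3)
      (by linarith : (0:ℝ) ≤ 7-x)) (by linarith : (0:ℝ) ≤ x),
      mul_nonneg (by linarith : (0:ℝ) ≤ x-3) (by linarith : (0:ℝ) ≤ 7-x)]) hu huv

lemma qIV4_cont (m : ℕ) : Continuous (qIV4 m) := by
  unfold qIV4; fun_prop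

lemma qIV4_exists_zero_dec (m : ℕ) (a b : ℝ) (hab : a ≤ b) (ha : 0 < qIV4 m a)
    (hb : qIV4 m b < 0) : ∃ r, a < r ∧ r ≤ b ∧ qIV4 m r = 0 := by
  obtain ⟨r, hr, hr0⟩ := intermediate_value_Icc' hab (qIV4_cont m).continuousOn
    (Set.mem_Icc.2 ⟨hb.le, ha.le⟩)
  refine ⟨r, lt_of_le_of_ne hr.1 ?_, hr.2, hr0⟩
  rintro rfl; rw [hr0] at ha; exact lt_irrefl 0 ha

lemma qIV4_exists_zero_inc (m : ℕ) (a b : ℝ) (hab : a ≤ b) (ha : qIV4 m a < 0)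
    (hb : 0 < qIV4 m b) : ∃ r, a < r ∧ r ≤ b ∧ qIV4 m r = 0 := by
  obtain ⟨r, hr, hr0⟩ := intermediate_value_Icc hab (qIV4_cont m).continuousOn
    (Set.mem_Icc.2 ⟨ha.le, hb.le⟩)
  refine ⟨r, lt_of_le_of_ne hr.1 ?_, hr.2, hr0⟩
  rintro rfl; rw [hr0] at ha; exact lt_irrefl 0 ha

lemma qIV4_zero (m : ℕ) : qIV4 m 0 = 12 := by simp [qIV4]

lemma s337_sq : (Real.sqrt 337)^2 = 337 := Real.sq_sqrt (by norm_num)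

lemma s337_lt : Real.sqrt 337 < 23 := by
  have := Real.sqrt_lt_sqrt (by norm_num : (0:ℝ) ≤ 337) (by norm_num : (337:ℝ) < 529)
  rwa [show (529:ℝ) = 23^2 by norm_num, Real.sqrt_sq (by norm_num : (0:ℝ) ≤ 23)] at this

lemma s337_pos : 0 < Real.sqrt 337 := Real.sqrt_pos.2 (by norm_num)

lemma qIV4_rho1_zero : qIV4 1 ((1 / 2) * Real.sqrt (23 - Real.sqrt 337)) = 0 := by
  rw [qIV4_q1_eq]
  set s := Real.sqrt 337 with hsd
  set μ := (1/2) * Real.sqrt (23 - s) with hμd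
  have hs : s^2 = 337 := s337_sq
  have hμ : μ^2 = (23 - s)/4 := by
    rw [hμd, mul_pow, Real.sq_sqrt (by linarith [s337_lt] : (0:ℝ) ≤ 23 - s)]; ring
  linear_combination (μ^2 + (23-s)/4 - 23/2) * hμ + (1/16) * hs

lemma qIV4_rho2_zero : qIV4 1 ((1 / 2) * Real.sqrt (23 + Real.sqrt 337)) = 0 := by
  rw [qIV4_q1_eq]
  set s := Real.sqrt 337 with hsd
  set μ := (1/2) * Real.sqrt (23 + s) with hμd
  have hs : s^2 = 337 := s337_sq
  have hμ : μ^2 = (23 + s)/4 := by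
    rw [hμd, mul_pow, Real.sq_sqrt (by linarith [s337_pos] : (0:ℝ) ≤ 23 + s)]; ring
  linear_combination (μ^2 + (23+s)/4 - 23/2) * hμ + (1/16) * hs

lemma qIV4_rho_lt :
    (1 / 2) * Real.sqrt (23 - Real.sqrt 337) < (1 / 2) * Real.sqrt (23 + Real.sqrt 337) := by
  have h := Real.sqrt_lt_sqrt (by linarith [s337_lt] : (0:ℝ) ≤ 23 - Real.sqrt 337)
    (by linarith [s337_pos] : 23 - Real.sqrt 337 < 23 + Real.sqrt 337)
  linarith

/-- Package for the two-positive-roots cases `m = 1, 2`. -/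
lemma qIV4_two_roots_pkg (m : ℕ) (A B : ℝ) (hBA : B ≤ A)
    (hdec : ∀ u v : ℝ, 0 < u → u < v → v ≤ A → qIV4 m v * u < qIV4 m u * v)
    (hinc : ∀ u v : ℝ, B ≤ u → u < v → qIV4 m u * v^3 < qIV4 m v * u^3)
    (ρ₁ ρ₂ : ℝ) (h0 : 0 < ρ₁) (h1A : ρ₁ ≤ A) (hB2 : B ≤ ρ₂) (h12 : ρ₁ < ρ₂)
    (hz1 : qIV4 m ρ₁ = 0) (hz2 : qIV4 m ρ₂ = 0) :
    (∀ x : ℝ, 0 < x → qIV4 m x = 0 → x = ρ₁ ∨ x = ρ₂) ∧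
    (∀ μ : ℝ, 0 < μ → (0 ≤ qIV4 m μ ↔ μ ≤ ρ₁ ∨ ρ₂ ≤ μ)) := by
  have h20 : 0 < ρ₂ := h0.trans h12
  have pos_lo : ∀ μ : ℝ, 0 < μ → μ < ρ₁ → 0 < qIV4 m μ := by
    intro μ hμ h
    have := hdec μ ρ₁ hμ h h1A
    rw [hz1] at this
    nlinarith
  have neg_mid : ∀ μ : ℝ, ρ₁ < μ → μ < ρ₂ → qIV4 m μ < 0 := by
    intro μ ha hb
    by_cases hA : μ ≤ A
    · have := hdec ρ₁ μ h0 ha hA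
      rw [hz1] at this
      nlinarith
    · push_neg at hA
      have := hinc μ ρ₂ (by linarith) hb
      rw [hz2] at this
      nlinarith [pow_pos h20 3]
  have pos_hi : ∀ μ : ℝ, ρ₂ < μ → 0 < qIV4 m μ := by
    intro μ h
    have := hinc ρ₂ μ hB2 h
    rw [hz2] at this
    nlinarith [pow_pos h20 3]
  constructor
  · intro x hx hqx
    rcases lt_trichotomy x ρ₁ with h | h | h
    · exact absurd hqx (by have := pos_lo x hx h; linarith)
    · exact Or.inl h
    rcases lt_trichotomy x ρ₂ with h' | h' | h'
    · exact absurd hqx (by have := neg_mid x h h'; linarith)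
    · exact Or.inr h'
    · exact absurd hqx (by have := pos_hi x h'; linarith)
  · intro μ hμ
    constructor
    · intro h
      by_contra hc
      push_neg at hc
      have := neg_mid μ hc.1 hc.2
      linarith
    · rintro (h | h)
      · rcases h.lt_or_eq with h' | h'
        · exact (pos_lo μ hμ h').le
        · rw [h', hz1]
      · rcases h.lt_or_eq with h' | h'
        · exact (pos_hi μ h').le
        · rw [← h', hz2]

/-- Sign of `q_m` for type `IV₄`: positivity for `m ≥ 8`; for `m = 1, 2`
exactly two positive roots `μ_{m,1} < μ_{m,2}` (with `μ_{1,1} = (1/2)√(23-√337)`,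
`μ_{1,2} = (1/2)√(23+√337)`) characterizing the sign; for `3 ≤ m ≤ 7` exactly
one positive root `μ_m` characterizing the sign. -/
theorem qIV4_sign :
    (∀ m : ℕ, 8 ≤ m → ∀ μ : ℝ, 0 < μ → 0 < qIV4 m μ) ∧
    (∀ m : ℕ, 1 ≤ m → m ≤ 2 → ∃ ρ₁ ρ₂ : ℝ, 0 < ρ₁ ∧ ρ₁ < ρ₂ ∧
      qIV4 m ρ₁ = 0 ∧ qIV4 m ρ₂ = 0 ∧
      (∀ x : ℝ, 0 < x → qIV4 m x = 0 → x = ρ₁ ∨ x = ρ₂) ∧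
      (∀ μ : ℝ, 0 < μ → (0 ≤ qIV4 m μ ↔ μ ≤ ρ₁ ∨ ρ₂ ≤ μ))) ∧
    qIV4 1 ((1 / 2) * Real.sqrt (23 - Real.sqrt 337)) = 0 ∧
    qIV4 1 ((1 / 2) * Real.sqrt (23 + Real.sqrt 337)) = 0 ∧
    (1 / 2) * Real.sqrt (23 - Real.sqrt 337) < (1 / 2) * Real.sqrt (23 + Real.sqrt 337) ∧
    (∀ m : ℕ, 3 ≤ m → m ≤ 7 → ∃! r : ℝ, 0 < r ∧ qIV4 m r = 0) ∧
    (∀ m : ℕ, 3 ≤ m → m ≤ 7 → ∀ r : ℝ, 0 < r → qIV4 m r = 0 →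
      ∀ μ : ℝ, 0 < μ → (0 ≤ qIV4 m μ ↔ μ ≤ r)) := by
  refine ⟨fun m h μ hμ => qIV4_pos_ge8 m h μ hμ, ?_, qIV4_rho1_zero, qIV4_rho2_zero,
    qIV4_rho_lt, ?_, ?_⟩
  · -- m = 1, 2 : two positive roots
    intro m h1 h2
    interval_cases m
    · -- m = 1
      obtain ⟨ρ₁, hρ₁0, hρ₁2, hρ₁⟩ := qIV4_exists_zero_dec 1 0 2 (by norm_num)
        (by rw [qIV4_zero]; norm_num) (by rw [qIV4_q1_eq]; norm_num)
      obtain ⟨ρ₂, hρ₂2, hρ₂4, hρ₂⟩ := qIV4_exists_zero_inc 1 2 4 (by norm_num)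
        (by rw [qIV4_q1_eq]; norm_num) (by rw [qIV4_q1_eq]; norm_num)
      have h12 : ρ₁ < ρ₂ := lt_of_le_of_lt hρ₁2 hρ₂2
      obtain ⟨hroots, hsign⟩ := qIV4_two_roots_pkg 1 2 2 le_rfl
        (fun u v hu huv hv => qIV4_m1dec u v hu huv hv)
        (fun u v hu huv => qIV4_m1inc u v hu huv)
        ρ₁ ρ₂ hρ₁0 hρ₁2 hρ₂2.le h12 hρ₁ hρ₂
      exact ⟨ρ₁, ρ₂, hρ₁0, h12, hρ₁, hρ₂, hroots, hsign⟩
    · -- m = 2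
      obtain ⟨ρ₁, hρ₁0, hρ₁2, hρ₁⟩ := qIV4_exists_zero_dec 2 0 2 (by norm_num)
        (by rw [qIV4_zero]; norm_num) (by rw [qIV4_q2_eq]; norm_num)
      obtain ⟨ρ₂, hρ₂17, hρ₂18, hρ₂⟩ := qIV4_exists_zero_inc 2 17 18 (by norm_num)
        (by rw [qIV4_q2_eq]; norm_num) (by rw [qIV4_q2_eq]; norm_num)
      have h12 : ρ₁ < ρ₂ := by linarith
      obtain ⟨hroots, hsign⟩ := qIV4_two_roots_pkg 2 10 3 (by norm_num)
        (fun u v hu huv hv => qIV4_m2dec u v hu huv hv)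
        (fun u v hu huv => qIV4_m2inc u v hu huv)
        ρ₁ ρ₂ hρ₁0 (by linarith) (by linarith) h12 hρ₁ hρ₂
      exact ⟨ρ₁, ρ₂, hρ₁0, h12, hρ₁, hρ₂, hroots, hsign⟩
  · -- 3 ≤ m ≤ 7 : unique positive root
    intro m h3 h7
    have h100 : qIV4 m 100 < 0 := by interval_cases m <;> norm_num [qIV4]
    obtain ⟨r, hr0, _, hz⟩ := qIV4_exists_zero_dec m 0 100 (by norm_num)
      (by rw [qIV4_zero]; norm_num) h100
    refine ⟨r, ⟨hr0, hz⟩, ?_⟩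
    rintro y ⟨hy0, hyz⟩
    rcases lt_trichotomy y r with h | h | h
    · have := qIV4_mono_mid m h3 h7 y r hy0 h
      rw [hyz, hz] at this
      norm_num at this
    · exact h
    · have := qIV4_mono_mid m h3 h7 r y hr0 h
      rw [hyz, hz] at this
      norm_num at this
  · -- 3 ≤ m ≤ 7 : sign characterization
    intro m h3 h7 r hr0 hz μ hμ
    constructor
    · intro h
      by_contra hc
      push_neg at hc
      have := qIV4_mono_mid m h3 h7 r μ hr0 hc
      rw [hz] at this
      nlinarith [pow_pos hr0 3]
    · intro h
      rcases h.lt_or_eq with h' | h'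
      · have := qIV4_mono_mid m h3 h7 μ r hμ h'
        rw [hz] at this
        nlinarith [pow_pos hr0 3]
      · rw [h', hz]
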